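/- arXiv:1605.07486 — 4 statements merged into one kernel-verified Lean document; each statement's English description precedes it below -/
import Mathlib

section
/- Let k be a field and let I be an ideal of the polynomial ring k[t_1,...,t_n] such that the quotient ring k[t_1,...,t_n]/I is a finite-dimensional k-vector space. Then there exists a finite order ideal β of exponent vectors such that the images in k[t_1,...,t_n]/I of the monomials t^s with s ∈ β form a k-vector space basis of the quotient ring. -/
/-!
Fix a monomial order and call an exponent `s` standard when the class of `x^s` is not a linear
combination of classes of smaller monomials. Standard monomials are linearly independent (look at
the largest one occurring in a relation), and by well-founded induction on the order they span the
quotient, so they form a basis, necessarily finite. If `t ≤ s` and `x^t` is a combination of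
smaller monomials, multiplying by `x^(s - t)` writes `x^s` as a combination of smaller monomials,
because the order is compatible with addition; hence the standard exponents form an order ideal.
-/

open Submodule Set

section SpanJumps

variable (K : Type*) {V ι : Type*} [LinearOrder ι]

def spanJumps [Semiring K] [AddCommMonoid V] [Module K V] (v : ι → V) : Set ι :=
  {i | v i ∉ span K (v '' Iio i)}

variable {K}

theorem linearIndepOn_spanJumps [DivisionRing K] [AddCommGroup V] [Module K V] (v : ι → V) :
    LinearIndepOn K v (spanJumps K v) := by
  classical
  refine linearIndepOn_iff_linearIndepOn_finset.2 fun t ht => ?_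
  induction t using Finset.induction_on_max with
  | empty => simp
  | insert a t hlt ih =>
    have hat : a ∉ t := fun h => (hlt a h).false
    rw [Finset.coe_insert, Set.insert_subset_iff] at ht
    rw [Finset.coe_insert, linearIndepOn_insert (by exact_mod_cast hat)]
    exact ⟨ih ht.2, fun h => ht.1 (span_mono (image_mono fun x hx => hlt x hx) h)⟩

theorem span_image_spanJumps [Semiring K] [AddCommMonoid V] [Module K V] [WellFoundedLT ι]
    (v : ι → V) :
    span K (v '' spanJumps K v) = span K (range v) := by
  refine le_antisymm (span_mono (image_subset_range _ _)) (span_le.2 ?_)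
  rintro _ ⟨i, rfl⟩
  induction i using WellFoundedLT.induction with
  | ind i ih =>
    by_cases hi : i ∈ spanJumps K v
    · exact subset_span (mem_image_of_mem v hi)
    · refine span_le.2 ?_ (not_not.1 hi)
      rintro _ ⟨j, hj, rfl⟩
      exact ih j hj

theorem mem_spanJumps_of_add_mem {A : Type*} [CommSemiring K] [Semiring A] [Algebra K A]
    [AddCommMonoid ι] [IsOrderedCancelAddMonoid ι] {v : ι → A}
    (hv : ∀ a b, v (a + b) = v a * v b) {a b : ι}
    (h : a + b ∈ spanJumps K v) : a ∈ spanJumps K v := by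
  intro ha
  refine h ?_
  have := mem_map_of_mem (f := LinearMap.mulRight K (v b)) ha
  rw [map_span, ← image_comp] at this
  rw [hv]
  refine span_mono ?_ this
  rintro _ ⟨c, hc, rfl⟩
  exact ⟨c + b, add_lt_add_left hc b, hv c b⟩

end SpanJumps

namespace MvPolynomial

variable {σ k : Type*}

theorem span_range_mk_monomial_one [CommRing k] (I : Ideal (MvPolynomial σ k)) :
    span k (range fun s => Ideal.Quotient.mk I (monomial s (1 : k))) = ⊤ := by
  have : (range fun s => Ideal.Quotient.mk I (monomial s (1 : k))) =
      (Ideal.Quotient.mkₐ k I).toLinearMap '' range (basisMonomials σ k) := by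
    rw [coe_basisMonomials, ← range_comp]
    rfl
  rw [this, span_image, (basisMonomials σ k).span_eq, Submodule.map_top, LinearMap.range_eq_top]
  exact Ideal.Quotient.mkₐ_surjective k I

variable [Field k] (m : MonomialOrder σ) (I : Ideal (MvPolynomial σ k))

/-- The exponents of the standard monomials of `I` for `m`, i.e. of the monomials outside the
initial ideal of `I`. -/
def standardExponents : Set (σ →₀ ℕ) :=
  m.toSyn.symm '' spanJumps k fun a => Ideal.Quotient.mk I (monomial (m.toSyn.symm a) (1 : k))

theorem linearIndepOn_standardExponents :
    LinearIndepOn k (fun s => Ideal.Quotient.mk I (monomial s (1 : k))) (standardExponents m I) :=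
  (linearIndepOn_spanJumps _).image_of_comp _ _

theorem span_image_standardExponents :
    span k ((fun s => Ideal.Quotient.mk I (monomial s (1 : k))) '' standardExponents m I) =
      ⊤ := by
  rw [standardExponents, ← image_comp]
  refine (span_image_spanJumps _).trans ?_
  rw [range_comp, m.toSyn.symm.surjective.range_eq, image_univ, span_range_mk_monomial_one]

theorem mem_standardExponents_of_le {s t : σ →₀ ℕ} (hs : s ∈ standardExponents m I)
    (hts : t ≤ s) : t ∈ standardExponents m I := by
  obtain ⟨a, ha, rfl⟩ := hs
  refine ⟨m.toSyn t, ?_, by simp⟩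
  refine mem_spanJumps_of_add_mem (b := m.toSyn (m.toSyn.symm a - t)) ?_ ?_
  · intro x y
    simp only [map_add, ← map_mul, monomial_mul, one_mul]
  · simpa [← map_add, add_tsub_cancel_of_le hts] using ha

end MvPolynomial

open MvPolynomial

/-- For a field `k` and an ideal `I` of `k[t_1,...,t_n]` with
finite-dimensional quotient, there is a finite order ideal `β` of exponent
vectors whose monomials map to a `k`-basis of the quotient. -/
theorem stmt0 {k : Type*} [Field k] {n : ℕ} (I : Ideal (MvPolynomial (Fin n) k))
    (hfd : FiniteDimensional k (MvPolynomial (Fin n) k ⧸ I)) :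
    ∃ β : Finset (Fin n →₀ ℕ),
      (∀ s ∈ β, ∀ t : Fin n →₀ ℕ, t ≤ s → t ∈ β) ∧
      LinearIndependent k (fun s : β =>
        Ideal.Quotient.mk I (MvPolynomial.monomial s.1 (1 : k))) ∧
      Submodule.span k (Set.range (fun s : β =>
        Ideal.Quotient.mk I (MvPolynomial.monomial s.1 (1 : k)))) = ⊤ := by
  let m : MonomialOrder (Fin n) := MonomialOrder.lex
  have hli := linearIndepOn_standardExponents m I
  have hfin : (standardExponents m I).Finite := Set.finite_coe_iff.1 hli.finite
  refine ⟨hfin.toFinset, fun s hs t hts => ?_, ?_, ?_⟩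
  · rw [Set.Finite.mem_toFinset] at hs ⊢
    exact mem_standardExponents_of_le m I hs hts
  · rwa [← hfin.coe_toFinset] at hli
  · have hspan := span_image_standardExponents m I
    rwa [← hfin.coe_toFinset, image_eq_range] at hspan
end

section
/- Let A be a commutative ring, let β be a finite order ideal of exponent vectors in ℕⁿ, and let I be an ideal of the polynomial ring A[t_1,...,t_n] such that the quotient A[t_1,...,t_n]/I is a free A-module for which the images of the monomials t^s, s ∈ β, form an A-module basis. Then I is generated, as an ideal, by its elements of total degree at most d(β) + 1. -/
/-!
Let `nf p = ∑ₛ cₛ tˢ`, where `(cₛ)` are the coordinates of `p mod I` in the basis. Then `nf` is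
`A`-linear, kills `I`, takes values of total degree `≤ d`, and `p - nf p ∈ I`. Hence every `p ∈ I`
equals `p - nf p`, and it suffices to show that `p - nf p` lies in the span `J` of the elements of
`I` of degree `≤ d + 1`. This holds for `p` of degree `≤ d + 1` directly, and in general by induction
on `p` via the identity
`tᵢ p - nf (tᵢ p) = tᵢ (p - nf p) + (tᵢ nf p - nf (tᵢ nf p))`,
whose last term comes from `tᵢ nf p`, of degree `≤ d + 1`.
-/

namespace MvPolynomial

variable {σ A : Type*} [CommRing A] {β : Finset (σ →₀ ℕ)} {I : Ideal (MvPolynomial σ A)}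
  (b : Module.Basis β A (MvPolynomial σ A ⧸ I))

noncomputable def normalForm : MvPolynomial σ A →ₗ[A] MvPolynomial σ A :=
  Finsupp.linearCombination A (fun s : β => monomial (s : σ →₀ ℕ) (1 : A)) ∘ₗ
    b.repr.toLinearMap ∘ₗ (Ideal.Quotient.mkₐ A I).toLinearMap

theorem normalForm_eq_of_mk_eq {p q : MvPolynomial σ A}
    (h : Ideal.Quotient.mk I p = Ideal.Quotient.mk I q) : normalForm b p = normalForm b q := by
  simp [normalForm, h]

theorem normalForm_eq_zero_of_mem {p : MvPolynomial σ A} (hp : p ∈ I) : normalForm b p = 0 := by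
  simp [normalForm, Ideal.Quotient.eq_zero_iff_mem.mpr hp]

variable {b}

theorem mk_normalForm (hb : ∀ s : β, b s = Ideal.Quotient.mk I (monomial s.1 (1 : A)))
    (p : MvPolynomial σ A) : Ideal.Quotient.mk I (normalForm b p) = Ideal.Quotient.mk I p := by
  conv_rhs => rw [← b.linearCombination_repr (Ideal.Quotient.mk I p)]
  simp only [normalForm, LinearMap.comp_apply, Finsupp.linearCombination_apply, map_finsuppSum,
    AlgHom.toLinearMap_apply, LinearEquiv.coe_coe, hb]
  exact Finsupp.sum_congr fun s _ => map_smul (Ideal.Quotient.mkₐ A I) _ _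

theorem sub_normalForm_mem (hb : ∀ s : β, b s = Ideal.Quotient.mk I (monomial s.1 (1 : A)))
    (p : MvPolynomial σ A) : p - normalForm b p ∈ I := by
  rw [← Ideal.Quotient.eq, mk_normalForm hb]

theorem totalDegree_normalForm_le {d : ℕ} (hd : ∀ s ∈ β, s.degree ≤ d) (p : MvPolynomial σ A) :
    (normalForm b p).totalDegree ≤ d := by
  have hspan : Submodule.span A (Set.range fun s : β => monomial (s : σ →₀ ℕ) (1 : A)) ≤
      restrictTotalDegree σ A d :=
    Submodule.span_le.mpr <| Set.range_subset_iff.mpr fun s =>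
      (mem_restrictTotalDegree _ _ _).mpr ((totalDegree_monomial_le _ _).trans (hd s s.2))
  rw [← mem_restrictTotalDegree]
  exact hspan ((Finsupp.range_linearCombination A).le (LinearMap.mem_range_self _ _))

theorem sub_normalForm_X_mul (hb : ∀ s : β, b s = Ideal.Quotient.mk I (monomial s.1 (1 : A)))
    (i : σ) (p : MvPolynomial σ A) :
    X i * p - normalForm b (X i * p) =
      X i * (p - normalForm b p) + (X i * normalForm b p - normalForm b (X i * normalForm b p)) := by
  have : normalForm b (X i * normalForm b p) = normalForm b (X i * p) :=
    normalForm_eq_of_mk_eq b (by rw [map_mul, map_mul, mk_normalForm hb])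
  rw [this]
  ring

theorem sub_normalForm_mem_span_totalDegree_le
    (hb : ∀ s : β, b s = Ideal.Quotient.mk I (monomial s.1 (1 : A)))
    {d : ℕ} (hd : ∀ s ∈ β, s.degree ≤ d) (p : MvPolynomial σ A) :
    p - normalForm b p ∈ Ideal.span {q | q ∈ I ∧ q.totalDegree ≤ d + 1} := by
  have low : ∀ q : MvPolynomial σ A, q.totalDegree ≤ d + 1 →
      q - normalForm b q ∈ Ideal.span {q | q ∈ I ∧ q.totalDegree ≤ d + 1} := fun q hq =>
    Ideal.subset_span ⟨sub_normalForm_mem hb q, (totalDegree_sub _ _).trans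
      (max_le hq ((totalDegree_normalForm_le hd q).trans d.le_succ))⟩
  induction p using MvPolynomial.induction_on with
  | C a => exact low _ (by rw [totalDegree_C]; omega)
  | add p q hp hq => simpa only [map_add, add_sub_add_comm] using Ideal.add_mem _ hp hq
  | mul_X p i hp =>
    rw [mul_comm, sub_normalForm_X_mul hb]
    refine Ideal.add_mem _ (Ideal.mul_mem_left _ _ hp) (low _ ?_)
    have hX : (X i : MvPolynomial σ A).totalDegree ≤ 1 :=
      (totalDegree_monomial_le _ _).trans (by simp)
    linarith [totalDegree_mul (X i) (normalForm b p), totalDegree_normalForm_le (b := b) hd p]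

theorem eq_span_totalDegree_le_of_basis_monomial
    (hb : ∀ s : β, b s = Ideal.Quotient.mk I (monomial s.1 (1 : A)))
    {d : ℕ} (hd : ∀ s ∈ β, s.degree ≤ d) :
    I = Ideal.span {p | p ∈ I ∧ p.totalDegree ≤ d + 1} := by
  refine le_antisymm (fun p hp => ?_) (Ideal.span_le.mpr fun p hp => hp.1)
  simpa [normalForm_eq_zero_of_mem b hp] using sub_normalForm_mem_span_totalDegree_le hb hd p

end MvPolynomial

theorem stmt2_general {A : Type*} [CommRing A] {n : ℕ} (β : Finset (Fin n →₀ ℕ))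
    (I : Ideal (MvPolynomial (Fin n) A))
    (b : Module.Basis β A (MvPolynomial (Fin n) A ⧸ I))
    (hb : ∀ s : β, b s = Ideal.Quotient.mk I (MvPolynomial.monomial s.1 (1 : A))) :
    I = Ideal.span {p : MvPolynomial (Fin n) A |
      p ∈ I ∧ p.totalDegree ≤ β.sup (fun s => ∑ i, s i) + 1} :=
  MvPolynomial.eq_span_totalDegree_le_of_basis_monomial hb fun s hs => by
    simpa only [Finsupp.degree_eq_sum] using Finset.le_sup (f := fun s => ∑ i, s i) hs

/-- If the images of the monomials `t^s`, `s ∈ β` (with `β` a finite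
order ideal of exponent vectors) form an `A`-module basis of `A[t_1,...,t_n]/I`,
then `I` is generated by its elements of total degree at most `d(β) + 1`. -/
theorem stmt2 {A : Type*} [CommRing A] {n : ℕ} (β : Finset (Fin n →₀ ℕ))
    (hdc : ∀ s ∈ β, ∀ t : Fin n →₀ ℕ, t ≤ s → t ∈ β)
    (I : Ideal (MvPolynomial (Fin n) A))
    (b : Module.Basis β A (MvPolynomial (Fin n) A ⧸ I))
    (hb : ∀ s : β, b s = Ideal.Quotient.mk I (MvPolynomial.monomial s.1 (1 : A))) :
    I = Ideal.span {p : MvPolynomial (Fin n) A |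
      p ∈ I ∧ p.totalDegree ≤ β.sup (fun s => ∑ i, s i) + 1} :=
  stmt2_general β I b hb
end

section
/- Let A be a commutative ring, let S = A[t_1,...,t_n] be the polynomial ring, and let F = S^m be the free S-module of rank m with standard basis e_1,...,e_m. Let R ⊆ F be an S-submodule and let β be a finite set of pairs (s, i), with s an exponent vector in ℕⁿ and i ∈ {1,...,m}, such that for each i the set {s : (s,i) ∈ β} is downward closed under the componentwise order, and such that F/R is a free A-module for which the images of the monomial elements t^s · e_i, (s,i) ∈ β, form an A-module basis. Let d(β) be the maximal total degree of the exponent vectors occurring in β. Then R is generated, as an S-module, by its elements all of whose nonzero coordinate polynomials have total degree at most d(β) + 1. -/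
/-!
The basis of `F/R` yields an `A`-linear map `N : F → F` sending `f` to the combination of the
monomials `t^s e_i`, `(s, i) ∈ β`, that represents its class. Then `f - N f ∈ R`, `N` kills
`R`, and `N f` has degree at most `d = d(β)`. Let `P ⊆ R` be the span of the elements of `R` of
degree at most `d + 1`. The set of `f` with `f - N f ∈ P` contains every `f` of degree at most
`d + 1` and is stable under multiplication by a polynomial `x` of degree at most one:
`x f - N (x f) = x (f - N f) + (x N f - N (x N f))`, since `N (x N f) = N (x f)` and `x N f` has
degree at most `d + 1`. Hence it is all of `F`, and `R ⊆ P` because `N` kills `R`.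
-/

open MvPolynomial

namespace Module.Basis

variable {A S M κ : Type*} [CommRing A] [Ring S] [Algebra A S] [AddCommGroup M] [Module S M]
  [Module A M] [IsScalarTower A S M] {R : Submodule S M}

/-- The representative of the class of `f` in the `A`-span of lifts `v` of the basis `b`. -/
noncomputable def normalForm (b : Basis κ A (M ⧸ R)) (v : κ → M) : M →ₗ[A] M :=
  Finsupp.linearCombination A v ∘ₗ b.repr.toLinearMap ∘ₗ R.mkQ.restrictScalars A

theorem sub_normalForm_mem {b : Basis κ A (M ⧸ R)} {v : κ → M}
    (hv : ∀ p, R.mkQ (v p) = b p) (f : M) : f - b.normalForm v f ∈ R := by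
  rw [← Submodule.Quotient.eq]
  have hv' : R.mkQ.restrictScalars A ∘ v = b := funext hv
  change R.mkQ f = R.mkQ.restrictScalars A (Finsupp.linearCombination A v (b.repr (R.mkQ f)))
  rw [Finsupp.apply_linearCombination, hv', b.linearCombination_repr]

theorem normalForm_eq_zero (b : Basis κ A (M ⧸ R)) (v : κ → M) {f : M} (hf : f ∈ R) :
    b.normalForm v f = 0 := by
  simp [normalForm, (Submodule.Quotient.mk_eq_zero R).2 hf]

theorem normalForm_mem_span (b : Basis κ A (M ⧸ R)) (v : κ → M) (f : M) :
    b.normalForm v f ∈ Submodule.span A (Set.range v) := by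
  rw [← Finsupp.range_linearCombination]
  exact LinearMap.mem_range_self _ _

end Module.Basis

namespace MvPolynomial

variable {σ ι A : Type*} [CommRing A]

theorem totalDegree_pi_single_monomial_le [DecidableEq ι] (i j : ι) (u : σ →₀ ℕ) (a : A) :
    (Pi.single (M := fun _ => MvPolynomial σ A) i (monomial u a) j).totalDegree ≤ u.degree := by
  rcases eq_or_ne j i with rfl | hji
  · rw [Pi.single_eq_same]
    exact totalDegree_monomial_le u a
  · rw [Pi.single_eq_of_ne hji, totalDegree_zero]
    exact Nat.zero_le _

theorem totalDegree_X_le (k : σ) : (X k : MvPolynomial σ A).totalDegree ≤ 1 :=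
  (totalDegree_monomial_le _ _).trans (by simp)

theorem totalDegree_apply_le_of_mem_span {s : Set (ι → MvPolynomial σ A)} {d : ℕ}
    (hs : ∀ g ∈ s, ∀ j, (g j).totalDegree ≤ d) {f : ι → MvPolynomial σ A}
    (hf : f ∈ Submodule.span A s) (j : ι) : (f j).totalDegree ≤ d := by
  have hle : Submodule.span A s ≤ Submodule.pi Set.univ fun _ => restrictTotalDegree σ A d :=
    Submodule.span_le.2 fun g hg j _ => (mem_restrictTotalDegree σ d _).2 (hs g hg j)
  exact (mem_restrictTotalDegree σ d _).1 (hle hf j (Set.mem_univ j))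

noncomputable def spanTotalDegreeLE (R : Submodule (MvPolynomial σ A) (ι → MvPolynomial σ A))
    (D : ℕ) : Submodule (MvPolynomial σ A) (ι → MvPolynomial σ A) :=
  Submodule.span (MvPolynomial σ A) {f | f ∈ R ∧ ∀ j, (f j).totalDegree ≤ D}

variable {R : Submodule (MvPolynomial σ A) (ι → MvPolynomial σ A)}
  {N : (ι → MvPolynomial σ A) →ₗ[A] (ι → MvPolynomial σ A)} {d : ℕ}

theorem sub_mem_spanTotalDegreeLE_of_totalDegree_le (hNR : ∀ f, f - N f ∈ R)
    (hNd : ∀ f j, (N f j).totalDegree ≤ d) {f : ι → MvPolynomial σ A}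
    (hf : ∀ j, (f j).totalDegree ≤ d + 1) :
    f - N f ∈ spanTotalDegreeLE R (d + 1) :=
  Submodule.subset_span ⟨hNR f, fun j =>
    (totalDegree_sub _ _).trans (max_le (hf j) ((hNd f j).trans d.le_succ))⟩

theorem smul_sub_mem_spanTotalDegreeLE_of_totalDegree_le_one (hNR : ∀ f, f - N f ∈ R)
    (hN0 : ∀ f ∈ R, N f = 0) (hNd : ∀ f j, (N f j).totalDegree ≤ d)
    {f : ι → MvPolynomial σ A} (hf : f - N f ∈ spanTotalDegreeLE R (d + 1))
    {x : MvPolynomial σ A} (hx : x.totalDegree ≤ 1) :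
    x • f - N (x • f) ∈ spanTotalDegreeLE R (d + 1) := by
  have hN : N (x • N f) = N (x • f) := by
    rw [← sub_eq_zero, ← map_sub, ← smul_sub, ← neg_sub, smul_neg]
    exact hN0 _ (R.neg_mem (R.smul_mem _ (hNR f)))
  have hsmall : x • N f - N (x • N f) ∈ spanTotalDegreeLE R (d + 1) := by
    refine sub_mem_spanTotalDegreeLE_of_totalDegree_le hNR hNd fun j => ?_
    refine (totalDegree_mul x (N f j)).trans ?_
    linarith [hNd f j]
  have hsplit : x • f - N (x • f) = x • (f - N f) + (x • N f - N (x • N f)) := by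
    rw [hN, smul_sub]; abel
  rw [hsplit]
  exact add_mem (Submodule.smul_mem _ _ hf) hsmall

theorem smul_sub_mem_spanTotalDegreeLE (hNR : ∀ f, f - N f ∈ R) (hN0 : ∀ f ∈ R, N f = 0)
    (hNd : ∀ f j, (N f j).totalDegree ≤ d) (p : MvPolynomial σ A)
    {f : ι → MvPolynomial σ A} (hf : f - N f ∈ spanTotalDegreeLE R (d + 1)) :
    p • f - N (p • f) ∈ spanTotalDegreeLE R (d + 1) := by
  induction p using MvPolynomial.induction_on generalizing f with
  | C a =>
    rw [← algebraMap_eq, algebraMap_smul, map_smul, ← smul_sub]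
    exact Submodule.smul_of_tower_mem _ a hf
  | add p q hp hq =>
    rw [add_smul, map_add, add_sub_add_comm]
    exact add_mem (hp hf) (hq hf)
  | mul_X p k hp =>
    rw [mul_smul]
    exact hp <|
      smul_sub_mem_spanTotalDegreeLE_of_totalDegree_le_one hNR hN0 hNd hf (totalDegree_X_le k)

theorem sub_mem_spanTotalDegreeLE [Fintype ι] [DecidableEq ι] (hNR : ∀ f, f - N f ∈ R)
    (hN0 : ∀ f ∈ R, N f = 0) (hNd : ∀ f j, (N f j).totalDegree ≤ d)
    (f : ι → MvPolynomial σ A) :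
    f - N f ∈ spanTotalDegreeLE R (d + 1) := by
  rw [pi_eq_sum_univ' f, map_sum, ← Finset.sum_sub_distrib]
  refine Submodule.sum_mem _ fun j _ => smul_sub_mem_spanTotalDegreeLE hNR hN0 hNd _ ?_
  refine sub_mem_spanTotalDegreeLE_of_totalDegree_le hNR hNd fun i => ?_
  rcases eq_or_ne i j with rfl | hij <;> simp [Pi.single_eq_of_ne, *]

theorem eq_spanTotalDegreeLE [Finite ι] (hNR : ∀ f, f - N f ∈ R)
    (hN0 : ∀ f ∈ R, N f = 0) (hNd : ∀ f j, (N f j).totalDegree ≤ d) :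
    R = spanTotalDegreeLE R (d + 1) := by
  classical
  have := Fintype.ofFinite ι
  refine le_antisymm (fun f hf => ?_) (Submodule.span_le.2 fun f hf => hf.1)
  simpa [hN0 f hf] using sub_mem_spanTotalDegreeLE hNR hN0 hNd f

end MvPolynomial

theorem stmt4_general {A : Type*} [CommRing A] {n m : ℕ}
    (R : Submodule (MvPolynomial (Fin n) A) (Fin m → MvPolynomial (Fin n) A))
    (β : Finset ((Fin n →₀ ℕ) × Fin m))
    (b : Module.Basis β A ((Fin m → MvPolynomial (Fin n) A) ⧸ R))
    (hb : ∀ p : β, b p = Submodule.Quotient.mk (p := R)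
      (Pi.single p.1.2 (MvPolynomial.monomial p.1.1 (1 : A)))) :
    R = Submodule.span (MvPolynomial (Fin n) A)
      {f : Fin m → MvPolynomial (Fin n) A |
        f ∈ R ∧ ∀ j, (f j).totalDegree ≤ β.sup (fun p => ∑ i, p.1 i) + 1} := by
  set v : β → (Fin m → MvPolynomial (Fin n) A) := fun p => Pi.single p.1.2 (monomial p.1.1 1)
  refine eq_spanTotalDegreeLE (N := b.normalForm v)
    (b.sub_normalForm_mem fun p => (hb p).symm) (fun _ => b.normalForm_eq_zero v)
    (fun f => totalDegree_apply_le_of_mem_span ?_ (b.normalForm_mem_span v f))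
  rintro _ ⟨p, rfl⟩ j
  calc _ ≤ p.1.1.degree := totalDegree_pi_single_monomial_le _ _ _ _
    _ = ∑ i, p.1.1 i := p.1.1.degree_eq_sum
    _ ≤ _ := Finset.le_sup (f := fun q => ∑ i, q.1 i) p.2

/-- Let `R ⊆ F = S^m` be a submodule over `S = A[t_1,...,t_n]` and `β`
a finite set of pairs (exponent vector, coordinate), downward closed in each
coordinate, whose monomial elements `t^s·e_i` map to an `A`-basis of the free
`A`-module `F/R`. Then `R` is generated as an `S`-module by its elements all of
whose coordinate polynomials have total degree at most `d(β) + 1`. -/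
theorem stmt4 {A : Type*} [CommRing A] {n m : ℕ}
    (R : Submodule (MvPolynomial (Fin n) A) (Fin m → MvPolynomial (Fin n) A))
    (β : Finset ((Fin n →₀ ℕ) × Fin m))
    (hdc : ∀ p ∈ β, ∀ t : Fin n →₀ ℕ, t ≤ p.1 → (t, p.2) ∈ β)
    (b : Module.Basis β A ((Fin m → MvPolynomial (Fin n) A) ⧸ R))
    (hb : ∀ p : β, b p = Submodule.Quotient.mk (p := R)
      (Pi.single p.1.2 (MvPolynomial.monomial p.1.1 (1 : A)))) :
    R = Submodule.span (MvPolynomial (Fin n) A)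
      {f : Fin m → MvPolynomial (Fin n) A |
        f ∈ R ∧ ∀ j, (f j).totalDegree ≤ β.sup (fun p => ∑ i, p.1 i) + 1} :=
  stmt4_general R β b hb
end

section
/- Let A be a commutative ring and let R = A[z, x_1, ..., x_n] be the polynomial ring in n+1 variables, graded by total degree, with V_m its A-module of homogeneous forms of degree m. Let β be a finite order ideal of exponent vectors in ℕⁿ, let d(β) be the maximal total degree of elements of β, and fix an integer d ≥ d(β) + 1. For λ ∈ β and m ≥ d(β), write z^{m−|λ|} x^λ for the degree-m homogenization of the monomial x^λ (where |λ| is the total degree of λ). Let J ⊆ R be a homogeneous ideal generated by homogeneous elements of degree d. Assume that the images of the elements z^{d−|λ|} x^λ, λ ∈ β, form an A-module basis of the quotient V_d / (J ∩ V_d). Then for every m ≥ 1, the images of the elements z^{d+m−|λ|} x^λ, λ ∈ β, generate the A-module V_{d+m} / (J ∩ V_{d+m}). -/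
open MvPolynomial

/-- The degree-`m` homogenization `z^{m-|λ|} x^λ` of the monomial `x^λ`, in the
polynomial ring `A[z, x_1, ..., x_n]` realized as `MvPolynomial (Fin (n+1)) A`
with `z` the variable of index `0` and `x_i` the variable of index `i` (via
`Fin.succ`). -/
noncomputable def homogMonomial (A : Type*) [CommRing A] {n : ℕ} (m : ℕ)
    (lam : Fin n →₀ ℕ) : MvPolynomial (Fin (n + 1)) A :=
  MvPolynomial.monomial
    (Finsupp.single (0 : Fin (n + 1)) (m - ∑ i, lam i) + Finsupp.mapDomain Fin.succ lam) (1 : A)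

section aux
variable {A : Type*} [CommRing A] {n : ℕ}

lemma degree_eq_sum {σ : Type*} (d : σ →₀ ℕ) : d.degree = d.sum fun _ e => e := rfl

lemma degree_add' {σ : Type*} (a b : σ →₀ ℕ) : (a + b).degree = a.degree + b.degree := by
  simp only [degree_eq_sum]
  exact Finsupp.sum_add_index' (fun _ => rfl) (fun _ _ _ => rfl)

lemma degree_single' {σ : Type*} (i : σ) (k : ℕ) : (Finsupp.single i k).degree = k := by
  simp only [degree_eq_sum]
  exact Finsupp.sum_single_index rfl

lemma degree_mapDomain' {σ τ : Type*} (f : σ → τ) (s : σ →₀ ℕ) :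
    (Finsupp.mapDomain f s).degree = s.degree := by
  simp only [degree_eq_sum]
  exact Finsupp.sum_mapDomain_index (fun _ => rfl) (fun _ _ _ => rfl)

lemma degree_fin (lam : Fin n →₀ ℕ) : lam.degree = ∑ i, lam i :=
  Finset.sum_subset (Finset.subset_univ _) (fun i _ h => Finsupp.notMem_support_iff.mp h)

lemma homogMonomial_isHomogeneous (m : ℕ) (lam : Fin n →₀ ℕ) (h : ∑ i, lam i ≤ m) :
    (homogMonomial A m lam).IsHomogeneous m := by
  apply isHomogeneous_monomial
  rw [degree_add', degree_single', degree_mapDomain', degree_fin]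
  omega

lemma X_zero_mul_homogMonomial (m : ℕ) (lam : Fin n →₀ ℕ) (h : ∑ i, lam i ≤ m) :
    X 0 * homogMonomial A m lam = homogMonomial A (m + 1) lam := by
  rw [homogMonomial, homogMonomial, X, monomial_mul, one_mul, ← add_assoc,
    ← Finsupp.single_add]
  have h2 : 1 + (m - ∑ i, lam i) = m + 1 - ∑ i, lam i := by omega
  rw [h2]

lemma sum_add_single (lam : Fin n →₀ ℕ) (i : Fin n) :
    ∑ j : Fin n, (lam + Finsupp.single i 1 : Fin n →₀ ℕ) j = (∑ j : Fin n, lam j) + 1 := by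
  simp [Finset.sum_add_distrib, Finsupp.single_apply]

lemma X_succ_mul_homogMonomial (m : ℕ) (lam : Fin n →₀ ℕ) (i : Fin n) (h : ∑ i, lam i ≤ m) :
    X i.succ * homogMonomial A m lam = homogMonomial A (m + 1) (lam + Finsupp.single i 1) := by
  rw [homogMonomial, homogMonomial, X, monomial_mul, one_mul]
  rw [sum_add_single lam i, Finsupp.mapDomain_add, Finsupp.mapDomain_single]
  have h2 : m + 1 - (∑ j, lam j + 1) = m - ∑ j, lam j := by omega
  rw [h2]
  congr 2
  rw [add_comm (Finsupp.single i.succ (1:ℕ)) _, add_assoc]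

end aux

/-- Let `J ⊆ A[z, x_1, ..., x_n]` be a homogeneous ideal generated in
degree `d ≥ d(β) + 1`, and suppose the images of the homogenized monomials
`z^{d-|λ|} x^λ`, `λ ∈ β`, form an `A`-basis of `V_d / (J ∩ V_d)` (expressed as:
they are independent modulo `J` and together with `J ∩ V_d` span `V_d`). Then for
all `m ≥ 1` the images of `z^{d+m-|λ|} x^λ`, `λ ∈ β`, generate `V_{d+m} / (J ∩ V_{d+m})`. -/


theorem stmt5 {A : Type*} [CommRing A] {n : ℕ} (β : Finset (Fin n →₀ ℕ))
    (hdc : ∀ s ∈ β, ∀ t : Fin n →₀ ℕ, t ≤ s → t ∈ β)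
    (d : ℕ) (hd : β.sup (fun s => ∑ i, s i) + 1 ≤ d)
    (J : Ideal (MvPolynomial (Fin (n + 1)) A))
    (hgen : ∃ G : Set (MvPolynomial (Fin (n + 1)) A),
      (∀ g ∈ G, g.IsHomogeneous d) ∧ J = Ideal.span G)
    (hspan : Submodule.span A ((fun lam => homogMonomial A d lam) '' (β : Set (Fin n →₀ ℕ)))
        ⊔ (J.restrictScalars A ⊓ homogeneousSubmodule (Fin (n + 1)) A d)
      = homogeneousSubmodule (Fin (n + 1)) A d)
    (hindep : ∀ c : (Fin n →₀ ℕ) → A,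
      (∑ lam ∈ β, c lam • homogMonomial A d lam) ∈ J → ∀ lam ∈ β, c lam = 0) :
    ∀ m : ℕ, 1 ≤ m →
      Submodule.span A ((fun lam => homogMonomial A (d + m) lam) '' (β : Set (Fin n →₀ ℕ)))
          ⊔ (J.restrictScalars A ⊓ homogeneousSubmodule (Fin (n + 1)) A (d + m))
        = homogeneousSubmodule (Fin (n + 1)) A (d + m) := by
  classical
  set S : ℕ → Submodule A (MvPolynomial (Fin (n + 1)) A) := fun m =>
    Submodule.span A ((fun lam => homogMonomial A (d + m) lam) '' (β : Set (Fin n →₀ ℕ)))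
      ⊔ (J.restrictScalars A ⊓ homogeneousSubmodule (Fin (n + 1)) A (d + m)) with hS
  -- every λ ∈ β has small degree
  have hβd : ∀ lam ∈ β, ∑ i, lam i + 1 ≤ d := fun lam hlam =>
    le_trans (Nat.succ_le_succ (Finset.le_sup (f := fun s => ∑ i, s i) hlam)) hd
  -- z · S m ≤ S (m+1), and multiplication by any variable lands in S (m+1) (key lemma below)
  -- Key lemma: homogMonomial (d+m) μ ∈ S m for |μ| ≤ d
  have key : ∀ m : ℕ, ∀ mu : Fin n →₀ ℕ, ∑ i, mu i ≤ d → homogMonomial A (d + m) mu ∈ S m := by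
    intro m
    induction m with
    | zero =>
      intro mu hmu
      rw [hS]
      simp only [Nat.add_zero]
      rw [hspan, mem_homogeneousSubmodule]
      exact homogMonomial_isHomogeneous d mu hmu
    | succ m ih =>
      intro mu hmu
      have hmem := ih mu hmu
      rw [hS] at hmem ⊢
      rcases Submodule.mem_sup.mp hmem with ⟨s, hs, j, hj, hsj⟩
      have hzs : X 0 * s ∈ Submodule.span A
          ((fun lam => homogMonomial A (d + (m+1)) lam) '' (β : Set (Fin n →₀ ℕ))) := by
        have := Submodule.span_induction (p := fun x _ => X (0 : Fin (n+1)) * x ∈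
            Submodule.span A ((fun lam => homogMonomial A (d + (m+1)) lam) '' (β : Set (Fin n →₀ ℕ))))
          (hx := hs) ?_ ?_ ?_ ?_
        · exact this
        · rintro x ⟨lam, hlam, rfl⟩
          rw [X_zero_mul_homogMonomial (d + m) lam (by have := hβd lam hlam; omega)]
          exact Submodule.subset_span ⟨lam, hlam, by rw [← Nat.add_assoc]⟩
        · simp
        · intro x y _ _ hx hy; rw [mul_add]; exact Submodule.add_mem _ hx hy
        · intro a x _ hx; rw [Algebra.mul_smul_comm]; exact Submodule.smul_mem _ a hx
      have hzj : X 0 * j ∈ (J.restrictScalars A ⊓ homogeneousSubmodule (Fin (n + 1)) A (d + (m+1))) := by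
        obtain ⟨hj1, hj2⟩ := Submodule.mem_inf.mp hj
        refine Submodule.mem_inf.mpr ⟨Ideal.mul_mem_left J _ hj1, ?_⟩
        rw [mem_homogeneousSubmodule] at hj2 ⊢
        have := (isHomogeneous_X A (0 : Fin (n+1))).mul hj2
        convert this using 1
        omega
      have : homogMonomial A (d + (m+1)) mu = X 0 * homogMonomial A (d + m) mu := by
        rw [X_zero_mul_homogMonomial (d + m) mu (by omega), ← Nat.add_assoc]
      rw [this, ← hsj, mul_add]
      exact Submodule.add_mem _ (Submodule.mem_sup_left hzs) (Submodule.mem_sup_right hzj)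
  -- multiplication by any variable maps S m into S (m+1)
  have mulVar : ∀ m : ℕ, ∀ i : Fin (n+1), ∀ p ∈ S m, X i * p ∈ S (m + 1) := by
    intro m i p hp
    rw [hS] at hp
    rcases Submodule.mem_sup.mp hp with ⟨s, hs, j, hj, hsj⟩
    have hxs : X i * s ∈ S (m + 1) := by
      have := Submodule.span_induction (p := fun x _ => X i * x ∈ S (m+1)) (hx := hs) ?_ ?_ ?_ ?_
      · exact this
      · rintro x ⟨lam, hlam, rfl⟩
        have hlamd : ∑ k, lam k + 1 ≤ d := hβd lam hlam
        rcases Fin.eq_zero_or_eq_succ i with rfl | ⟨k, rfl⟩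
        · rw [X_zero_mul_homogMonomial (d + m) lam (by omega)]
          rw [show d + m + 1 = d + (m + 1) by omega]
          exact key (m+1) lam (by omega)
        · rw [X_succ_mul_homogMonomial (d + m) lam k (by omega)]
          rw [show d + m + 1 = d + (m + 1) by omega]
          apply key (m+1)
          have := sum_add_single lam k
          omega
      · simp
      · intro x y _ _ hx hy; rw [mul_add]; exact Submodule.add_mem _ hx hy
      · intro a x _ hx; rw [Algebra.mul_smul_comm]; exact Submodule.smul_mem _ a hx
    have hxj : X i * j ∈ S (m + 1) := by
      obtain ⟨hj1, hj2⟩ := Submodule.mem_inf.mp hj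
      apply Submodule.mem_sup_right
      refine Submodule.mem_inf.mpr ⟨Ideal.mul_mem_left J _ hj1, ?_⟩
      rw [mem_homogeneousSubmodule] at hj2 ⊢
      have := (isHomogeneous_X A i).mul hj2
      convert this using 1
      omega
    rw [← hsj, mul_add]
    exact Submodule.add_mem _ hxs hxj
  -- Main induction: S m = V_{d+m}
  have main : ∀ m : ℕ, S m = homogeneousSubmodule (Fin (n + 1)) A (d + m) := by
    intro m
    induction m with
    | zero => rw [hS]; simpa using hspan
    | succ m ih =>
      apply le_antisymm
      · rw [hS]
        apply sup_le
        · rw [Submodule.span_le]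
          rintro x ⟨lam, hlam, rfl⟩
          rw [SetLike.mem_coe, mem_homogeneousSubmodule]
          exact homogMonomial_isHomogeneous _ lam (by have := hβd lam hlam; omega)
        · exact inf_le_right
      · -- every homogeneous poly of degree d+m+1 is in S (m+1)
        intro p hp
        rw [mem_homogeneousSubmodule] at hp
        rw [← support_sum_monomial_coeff p]
        apply Submodule.sum_mem
        intro v hv
        have hvdeg : v.degree = d + (m + 1) := by
          have := hp (MvPolynomial.mem_support_iff.mp hv)
          rw [degree_eq_sum]
          rw [Finsupp.weight_apply] at this
          · rw [← this]
            apply Finsupp.sum_congr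
            intro i _
            simp
        -- pick a variable in v
        have hvne : v ≠ 0 := by
          intro h
          rw [h, map_zero] at hvdeg
          omega
        obtain ⟨i, hi⟩ : ∃ i, v i ≠ 0 := by
          by_contra h
          push_neg at h
          exact hvne (Finsupp.ext fun i => h i)
        set v' := v - Finsupp.single i 1 with hv'
        have hvv : v = Finsupp.single i 1 + v' := by
          ext j
          rw [hv']
          simp only [Finsupp.add_apply, Finsupp.tsub_apply, Finsupp.single_apply]
          by_cases hij : i = j
          · subst hij; simp; omega
          · simp [hij]
        have hv'deg : v'.degree = d + m := by
          have := degree_add' (Finsupp.single i 1) v'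
          rw [← hvv, hvdeg, degree_single'] at this
          omega
        have hmono : monomial v (coeff v p) = coeff v p • (X i * monomial v' 1) := by
          rw [X, monomial_mul, one_mul, ← hvv, smul_monomial, smul_eq_mul, mul_one]
        rw [hmono]
        apply Submodule.smul_mem
        apply mulVar
        rw [ih, mem_homogeneousSubmodule]
        exact isHomogeneous_monomial _ hv'deg
  intro m _
  have := main m
  rw [hS] at this
  exact this
end
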